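/- arXiv:math/0511740 — 2 statements merged into one kernel-verified Lean document; each statement's English description precedes it below -/
import Mathlib

section
/- First variation of area for graphs (Lagrange): let Ω ⊆ ℝ² be open, let u : ℝ² → ℝ be continuously differentiable, let φ : ℝ² → ℝ be smooth with compact support contained in Ω, and let K be the topological support of φ. Then the function t ↦ ∫_K √(1 + ‖∇u(x) + t·∇φ(x)‖²) dx is differentiable at t = 0, with derivative equal to ∫_K ⟨∇u(x), ∇φ(x)⟩ / √(1 + ‖∇u(x)‖²) dx. -/
open Real MeasureTheory

section aux

variable {E : Type*} [NormedAddCommGroup E] [InnerProductSpace ℝ E]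

private lemma deriv_aux (a b : E) (t : ℝ) :
    HasDerivAt (fun s : ℝ => Real.sqrt (1 + ‖a + s • b‖ ^ 2))
      ((inner ℝ (a + t • b) b  : ℝ) / Real.sqrt (1 + ‖a + t • b‖ ^ 2)) t := by
  have h1 : HasDerivAt (fun s : ℝ => a + s • b) b t := by
    simpa using ((hasDerivAt_id t).smul_const b).const_add a
  have h2 : HasDerivAt (fun s : ℝ => 1 + ‖a + s • b‖ ^ 2)
      (2 * (inner ℝ (a + t • b) b : ℝ)) t := by
    have h3 : HasDerivAt (fun s : ℝ => (inner ℝ (a + s • b) (a + s • b) : ℝ))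
        ((inner ℝ (a + t • b) b : ℝ) + (inner ℝ b (a + t • b) : ℝ)) t := h1.inner ℝ h1
    have h4 : HasDerivAt (fun s : ℝ => ‖a + s • b‖ ^ 2)
        (2 * (inner ℝ (a + t • b) b : ℝ)) t := by
      have heq : (fun s : ℝ => ‖a + s • b‖ ^ 2)
          = fun s : ℝ => (inner ℝ (a + s • b) (a + s • b) : ℝ) := by
        funext s; rw [real_inner_self_eq_norm_sq]
      rw [heq]
      convert h3 using 1
      rw [real_inner_comm]; ring
    simpa using h4.const_add 1
  have hne : 1 + ‖a + t • b‖ ^ 2 ≠ 0 := by positivity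
  have := h2.sqrt hne
  convert this using 1
  field_simp

private lemma bound_aux (a b : E) :
    |(inner ℝ a b : ℝ) / Real.sqrt (1 + ‖a‖ ^ 2)| ≤ ‖b‖ := by
  have hpos : 0 < Real.sqrt (1 + ‖a‖ ^ 2) := Real.sqrt_pos.2 (by positivity)
  rw [abs_div, abs_of_pos hpos, div_le_iff₀ hpos]
  calc |(inner ℝ a b : ℝ)| ≤ ‖a‖ * ‖b‖ := abs_real_inner_le_norm a b
    _ ≤ Real.sqrt (1 + ‖a‖ ^ 2) * ‖b‖ := by
        apply mul_le_mul_of_nonneg_right _ (norm_nonneg b)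
        have : ‖a‖ = Real.sqrt (‖a‖ ^ 2) := (Real.sqrt_sq (norm_nonneg a)).symm
        rw [this]
        apply Real.sqrt_le_sqrt
        rw [Real.sq_sqrt (sq_nonneg _), Real.sqrt_sq (norm_nonneg a)] at *
        nlinarith [sq_nonneg ‖a‖]
    _ = ‖b‖ * Real.sqrt (1 + ‖a‖ ^ 2) := mul_comm _ _

end aux

/-- **First variation of area for graphs (Lagrange).**
If `u` is `C¹`, `φ` is smooth with compact support contained in an open set `Ω`,
and `K = tsupport φ`, then `t ↦ ∫_K √(1 + ‖∇u + t∇φ‖²)` is differentiable at `t = 0`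
with derivative `∫_K ⟨∇u, ∇φ⟩ / √(1 + ‖∇u‖²)`. -/
theorem first_variation_of_graph_area
    (Ω : Set (EuclideanSpace ℝ (Fin 2))) (hΩ : IsOpen Ω)
    (u φ : EuclideanSpace ℝ (Fin 2) → ℝ)
    (hu : ContDiff ℝ 1 u) (hφ : ContDiff ℝ (⊤ : ℕ∞) φ)
    (hφc : HasCompactSupport φ) (hφΩ : tsupport φ ⊆ Ω) :
    HasDerivAt
      (fun t : ℝ =>
        ∫ x in tsupport φ, Real.sqrt (1 + ‖gradient u x + t • gradient φ x‖ ^ 2))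
      (∫ x in tsupport φ,
        (inner ℝ (gradient u x) (gradient φ x) : ℝ) / Real.sqrt (1 + ‖gradient u x‖ ^ 2))
      0 := by
  set K := tsupport φ with hK
  have hKc : IsCompact K := hφc
  have hgu : Continuous (gradient u) := by
    have : Continuous (fderiv ℝ u) := hu.continuous_fderiv one_ne_zero
    exact (InnerProductSpace.toDual ℝ _).symm.continuous.comp this
  have hgφ : Continuous (gradient φ) := by
    have : Continuous (fderiv ℝ φ) := hφ.continuous_fderiv (by simp)
    exact (InnerProductSpace.toDual ℝ _).symm.continuous.comp this
  set μ : Measure (EuclideanSpace ℝ (Fin 2)) := volume.restrict K with hμ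
  set F : ℝ → EuclideanSpace ℝ (Fin 2) → ℝ :=
    fun t x => Real.sqrt (1 + ‖gradient u x + t • gradient φ x‖ ^ 2) with hF
  set F' : ℝ → EuclideanSpace ℝ (Fin 2) → ℝ :=
    fun t x => (inner ℝ (gradient u x + t • gradient φ x) (gradient φ x) : ℝ) /
      Real.sqrt (1 + ‖gradient u x + t • gradient φ x‖ ^ 2) with hF'
  have hv : ∀ t : ℝ, Continuous (fun x => gradient u x + t • gradient φ x) :=
    fun t => hgu.add (hgφ.const_smul t)
  have hs : ∀ t : ℝ, Continuous (fun x => Real.sqrt (1 + ‖gradient u x + t • gradient φ x‖ ^ 2)) :=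
    fun t => Real.continuous_sqrt.comp (continuous_const.add ((hv t).norm.pow 2))
  have hspos : ∀ (t : ℝ) x, (0:ℝ) < Real.sqrt (1 + ‖gradient u x + t • gradient φ x‖ ^ 2) :=
    fun t x => Real.sqrt_pos.2 (by positivity)
  have hFmeas : ∀ᶠ t in nhds (0 : ℝ), AEStronglyMeasurable (F t) μ := by
    filter_upwards with t
    exact (hs t).aestronglyMeasurable
  have hFint : Integrable (F 0) μ := by
    exact ((hs 0).continuousOn).integrableOn_compact hKc
  have hF'meas : AEStronglyMeasurable (F' 0) μ :=
    (((hv 0).inner hgφ).div (hs 0) (fun x => (hspos 0 x).ne')).aestronglyMeasurable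
  have hbound : ∀ᵐ x ∂μ, ∀ t ∈ Metric.ball (0:ℝ) 1, ‖F' t x‖ ≤ ‖gradient φ x‖ := by
    filter_upwards with x t _
    rw [Real.norm_eq_abs]
    exact bound_aux (gradient u x + t • gradient φ x) (gradient φ x)
  have hbint : Integrable (fun x => ‖gradient φ x‖) μ :=
    (hgφ.norm.continuousOn).integrableOn_compact hKc
  have hdiff : ∀ᵐ x ∂μ, ∀ t ∈ Metric.ball (0:ℝ) 1, HasDerivAt (fun t => F t x) (F' t x) t := by
    filter_upwards with x t _
    exact deriv_aux (gradient u x) (gradient φ x) t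
  have := (hasDerivAt_integral_of_dominated_loc_of_deriv_le (Metric.ball_mem_nhds 0 one_pos)
    hFmeas hFint hF'meas hbound hbint hdiff).2
  simpa [F, F'] using this
end

section
/- Minimal graphs minimize area among graphs with the same boundary values: let Ω ⊆ ℝ² be open, let u : ℝ² → ℝ be twice continuously differentiable and satisfy the minimal surface equation at every point of Ω, let φ : ℝ² → ℝ be smooth with compact support contained in Ω, and let K be the topological support of φ. Then ∫_K √(1 + ‖∇u(x) + ∇φ(x)‖²) dx ≥ ∫_K √(1 + ‖∇u(x)‖²) dx. -/
open Real MeasureTheory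

/-- First partial derivative (direction of the first coordinate). -/
noncomputable def partialDeriv₁ (u : EuclideanSpace ℝ (Fin 2) → ℝ)
    (x : EuclideanSpace ℝ (Fin 2)) : ℝ :=
  fderiv ℝ u x (EuclideanSpace.single 0 1)

/-- Second partial derivative (direction of the second coordinate). -/
noncomputable def partialDeriv₂ (u : EuclideanSpace ℝ (Fin 2) → ℝ)
    (x : EuclideanSpace ℝ (Fin 2)) : ℝ :=
  fderiv ℝ u x (EuclideanSpace.single 1 1)

/-- `u` satisfies the minimal surface equation at every point of `Ω`. -/
def SatisfiesMinimalSurfaceEquation (u : EuclideanSpace ℝ (Fin 2) → ℝ)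
    (Ω : Set (EuclideanSpace ℝ (Fin 2))) : Prop :=
  ∀ x ∈ Ω,
    (1 + (partialDeriv₂ u x) ^ 2) * partialDeriv₁ (partialDeriv₁ u) x
      - 2 * (partialDeriv₁ u x) * (partialDeriv₂ u x) * partialDeriv₂ (partialDeriv₁ u) x
      + (1 + (partialDeriv₁ u x) ^ 2) * partialDeriv₂ (partialDeriv₂ u) x = 0

section Aux

/-- Convexity of the area integrand: the first-order Taylor bound. -/
lemma convexity_aux {E : Type*} [NormedAddCommGroup E] [InnerProductSpace ℝ E]
    (a b : E) :
    Real.sqrt (1 + ‖a‖ ^ 2) + (Real.sqrt (1 + ‖a‖ ^ 2))⁻¹ * (inner ℝ a b : ℝ)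
      ≤ Real.sqrt (1 + ‖a + b‖ ^ 2) := by
  have h1 : (0:ℝ) < 1 + ‖a‖ ^ 2 := by positivity
  have h2 : (0:ℝ) ≤ 1 + ‖a + b‖ ^ 2 := by positivity
  set A := Real.sqrt (1 + ‖a‖ ^ 2) with hA
  set B := Real.sqrt (1 + ‖a + b‖ ^ 2) with hB
  have hApos : 0 < A := Real.sqrt_pos.2 h1
  have hA2 : A ^ 2 = 1 + ‖a‖ ^ 2 := Real.sq_sqrt h1.le
  have hB2 : B ^ 2 = 1 + ‖a + b‖ ^ 2 := Real.sq_sqrt h2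
  have hBpos : 0 ≤ B := Real.sqrt_nonneg _
  have hab : ‖a + b‖ ^ 2 = ‖a‖ ^ 2 + 2 * (inner ℝ a b : ℝ) + ‖b‖ ^ 2 := norm_add_sq_real a b
  have hcs : (inner ℝ a b : ℝ) * inner ℝ a b ≤ ‖a‖ ^ 2 * ‖b‖ ^ 2 := by
    have := real_inner_mul_inner_self_le a b
    rwa [real_inner_self_eq_norm_sq, real_inner_self_eq_norm_sq] at this
  have key : A ^ 2 + (inner ℝ a b : ℝ) ≤ A * B := by
    rcases le_or_gt (A ^ 2 + (inner ℝ a b : ℝ)) 0 with h | h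
    · exact h.trans (by positivity)
    · have hsq : (A ^ 2 + (inner ℝ a b : ℝ)) ^ 2 ≤ (A * B) ^ 2 := by
        rw [mul_pow, hA2, hB2, hab]
        nlinarith [sq_nonneg ‖b‖]
      nlinarith [mul_nonneg hApos.le hBpos, hsq, h]
  calc A + A⁻¹ * (inner ℝ a b : ℝ) = A⁻¹ * (A ^ 2 + inner ℝ a b) := by
        field_simp
    _ ≤ A⁻¹ * (A * B) := by
        apply mul_le_mul_of_nonneg_left key (by positivity)
    _ = B := by field_simp

/-- Integral of a divergence of a compactly supported `C¹` vector field on `ℝ²` vanishes. -/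
lemma pi_div_integral (g : Fin 2 → ((Fin 2 → ℝ) → ℝ))
    (hg : ∀ i, ContDiff ℝ 1 (g i)) (hgc : ∀ i, HasCompactSupport (g i)) :
    ∫ x : Fin 2 → ℝ, ∑ i, fderiv ℝ (g i) x (Pi.single i 1) = 0 := by
  obtain ⟨R₀, hR₀pos, hR₀⟩ := (hgc 0).exists_pos_le_norm
  obtain ⟨R₁, hR₁pos, hR₁⟩ := (hgc 1).exists_pos_le_norm
  set R := max R₀ R₁ with hR
  have hRpos : 0 < R := lt_of_lt_of_le hR₀pos (le_max_left _ _)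
  have hzero : ∀ i (x : Fin 2 → ℝ), R ≤ ‖x‖ → g i x = 0 := by
    intro i x hx
    fin_cases i
    · exact hR₀ x (le_trans (le_max_left _ _) hx)
    · exact hR₁ x (le_trans (le_max_right _ _) hx)
  have hts : ∀ i, tsupport (g i) ⊆ Metric.closedBall 0 R := by
    intro i
    apply closure_minimal ?_ Metric.isClosed_closedBall
    intro x hx
    simp only [Metric.mem_closedBall, dist_zero_right]
    by_contra h
    exact hx (hzero i x (le_of_not_ge h))
  have hfd : ∀ i x, x ∉ Metric.closedBall (0 : Fin 2 → ℝ) R → fderiv ℝ (g i) x = 0 := by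
    intro i x hx
    apply image_eq_zero_of_notMem_tsupport
    intro h
    exact hx (closure_minimal (support_fderiv_subset ℝ) (isClosed_tsupport _) h |> hts i)
  set a : Fin 2 → ℝ := fun _ => -(R+1) with ha
  set b : Fin 2 → ℝ := fun _ => (R+1) with hb
  have hle : a ≤ b := fun i => by simp only [ha, hb]; linarith
  have hcont : ∀ i : Fin 2, Continuous (fun x => fderiv ℝ (g i) x (Pi.single i 1)) := by
    intro i
    exact (ContinuousLinearMap.apply ℝ ℝ (Pi.single i (1:ℝ))).continuous.comp
      ((hg i).fderiv_right (m := 0) (by norm_num)).continuous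
  have hfar : ∀ (x : Fin 2 → ℝ), R < ‖x‖ → ∀ i, fderiv ℝ (g i) x = 0 := by
    intro x hx i
    apply hfd i x
    simp only [Metric.mem_closedBall, dist_zero_right, not_le]
    exact hx
  have hdivsupp : ∀ x ∉ Set.Icc a b, (∑ i, fderiv ℝ (g i) x (Pi.single i 1)) = 0 := by
    intro x hx
    rw [Set.mem_Icc, not_and_or] at hx
    have hnorm : R < ‖x‖ := by
      have h2 : ∀ i, |x i| ≤ ‖x‖ := fun i => by
        simpa [Real.norm_eq_abs] using norm_le_pi_norm x i
      rcases hx with hx | hx <;> rw [Pi.le_def, not_forall] at hx <;> obtain ⟨i, hi⟩ := hx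
      · simp only [ha, not_le] at hi
        have := neg_abs_le (x i)
        linarith [h2 i]
      · simp only [hb, not_le] at hi
        have := le_abs_self (x i)
        linarith [h2 i]
    simp [hfar x hnorm]
  have hdivint : Integrable (fun x => ∑ i, fderiv ℝ (g i) x (Pi.single i 1)) := by
    apply Continuous.integrable_of_hasCompactSupport
    · exact continuous_finset_sum _ fun i _ => hcont i
    · apply HasCompactSupport.intro (isCompact_closedBall (0 : Fin 2 → ℝ) R)
      intro x hx
      simp [fun i => hfd i x hx]
  have key := integral_divergence_of_hasFDerivAt_off_countable' a b hle g
      (fun i x => fderiv ℝ (g i) x) ∅ Set.countable_empty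
      (fun i => (hg i).continuous.continuousOn)
      (fun x _ i => ((hg i).differentiable one_ne_zero).differentiableAt.hasFDerivAt)
      hdivint.integrableOn
  rw [setIntegral_eq_integral_of_forall_compl_eq_zero hdivsupp] at key
  rw [key]
  apply Finset.sum_eq_zero
  intro i _
  have hz : ∀ (c : ℝ), R < |c| → ∀ (y : Fin 1 → ℝ),
      g i (Fin.insertNth (α := fun _ => ℝ) i c y) = 0 := by
    intro c hc y
    apply hzero i
    refine le_trans hc.le ?_
    have h3 := norm_le_pi_norm (Fin.insertNth (α := fun _ => ℝ) i c y) i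
    rw [Fin.insertNth_apply_same] at h3
    simpa [Real.norm_eq_abs] using h3
  have h1 : R < |b i| := by simp only [hb]; rw [abs_of_pos (by linarith)]; linarith
  have h2 : R < |a i| := by simp only [ha]; rw [abs_of_neg (by linarith)]; linarith
  rw [integral_congr_ae (Filter.Eventually.of_forall fun y => hz (b i) h1 y),
    integral_congr_ae (Filter.Eventually.of_forall fun y => hz (a i) h2 y)]
  simp

/-- The same on `EuclideanSpace ℝ (Fin 2)`. -/
lemma euclidean_div_integral (f : Fin 2 → (EuclideanSpace ℝ (Fin 2) → ℝ))
    (hf : ∀ i, ContDiff ℝ 1 (f i)) (hfc : ∀ i, HasCompactSupport (f i)) :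
    ∫ x : EuclideanSpace ℝ (Fin 2),
      ∑ i, fderiv ℝ (f i) x (EuclideanSpace.single i 1) = 0 := by
  set eL := EuclideanSpace.equiv (Fin 2) ℝ with heL
  set ψ := (MeasurableEquiv.toLp 2 (Fin 2 → ℝ)).symm with hψdef
  have hψ := EuclideanSpace.volume_preserving_symm_measurableEquiv_toLp (Fin 2)
  set D : EuclideanSpace ℝ (Fin 2) → ℝ :=
    fun x => ∑ i, fderiv ℝ (f i) x (EuclideanSpace.single i 1) with hD
  have step1 : ∫ x : EuclideanSpace ℝ (Fin 2), D x = ∫ y : Fin 2 → ℝ, D (ψ.symm y) := by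
    rw [← hψ.integral_comp ψ.measurableEmbedding (fun y => D (ψ.symm y))]
    simp
    rfl
  rw [step1]
  have step2 : ∀ y : Fin 2 → ℝ,
      D (ψ.symm y) = ∑ i, fderiv ℝ (f i ∘ eL.symm) y (Pi.single i 1) := by
    intro y
    rw [hD]
    refine Finset.sum_congr rfl fun i _ => ?_
    have hdiff : DifferentiableAt ℝ (f i) (eL.symm y) := ((hf i).differentiable one_ne_zero) _
    rw [eL.symm.comp_right_fderiv]
    rfl
  rw [integral_congr_ae (Filter.Eventually.of_forall step2)]
  exact pi_div_integral (fun i => f i ∘ eL.symm)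
    (fun i => (hf i).comp eL.symm.contDiff)
    (fun i => (hfc i).comp_homeomorph eL.symm.toHomeomorph)

/-- Pointwise vanishing of the divergence of the normalized gradient field, at points
where the minimal surface equation holds. -/
lemma mse_pointwise (u : EuclideanSpace ℝ (Fin 2) → ℝ) (hu : ContDiff ℝ 2 u)
    (x : EuclideanSpace ℝ (Fin 2))
    (hmse : (1 + (partialDeriv₂ u x) ^ 2) * partialDeriv₁ (partialDeriv₁ u) x
      - 2 * (partialDeriv₁ u x) * (partialDeriv₂ u x) * partialDeriv₂ (partialDeriv₁ u) x
      + (1 + (partialDeriv₁ u x) ^ 2) * partialDeriv₂ (partialDeriv₂ u) x = 0) :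
    ∑ i : Fin 2, fderiv ℝ (fun y => fderiv ℝ u y (EuclideanSpace.single i 1) *
        (Real.sqrt (1 + (fderiv ℝ u y (EuclideanSpace.single 0 1) * fderiv ℝ u y (EuclideanSpace.single 0 1)
          + fderiv ℝ u y (EuclideanSpace.single 1 1) * fderiv ℝ u y (EuclideanSpace.single 1 1))))⁻¹)
        x (EuclideanSpace.single i 1) = 0 := by
  set p : Fin 2 → EuclideanSpace ℝ (Fin 2) → ℝ :=
    fun i y => fderiv ℝ u y (EuclideanSpace.single i 1) with hpdef
  have hpdiff : ∀ i, ContDiff ℝ 1 (p i) := fun i =>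
    (ContinuousLinearMap.apply ℝ ℝ (EuclideanSpace.single i (1:ℝ))).contDiff.comp
      (hu.fderiv_right (m := 1) (by norm_num))
  have hpd : ∀ i y, HasFDerivAt (p i) (fderiv ℝ (p i) y) y := fun i y =>
    (((hpdiff i).differentiable one_ne_zero) y).hasFDerivAt
  set S : EuclideanSpace ℝ (Fin 2) → ℝ := fun y => 1 + (p 0 y * p 0 y + p 1 y * p 1 y) with hSdef
  have hSpos : ∀ y, 0 < S y := fun y => by
    have h1 : 0 ≤ p 0 y * p 0 y := mul_self_nonneg _
    have h2 : 0 ≤ p 1 y * p 1 y := mul_self_nonneg _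
    simp only [hSdef]; linarith
  set W : EuclideanSpace ℝ (Fin 2) → ℝ := fun y => Real.sqrt (S y) with hWdef
  have hWpos : ∀ y, 0 < W y := fun y => Real.sqrt_pos.2 (hSpos y)
  set dp : Fin 2 → _ := fun i => fderiv ℝ (p i) x with hdpdef
  have hS : HasFDerivAt S (((p 0 x • dp 0 + p 0 x • dp 0) + (p 1 x • dp 1 + p 1 x • dp 1))) x := by
    exact (((hpd 0 x).mul (hpd 0 x)).add ((hpd 1 x).mul (hpd 1 x))).const_add 1
  set dS : EuclideanSpace ℝ (Fin 2) →L[ℝ] ℝ :=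
    ((p 0 x • dp 0 + p 0 x • dp 0) + (p 1 x • dp 1 + p 1 x • dp 1)) with hdSdef
  have hW : HasFDerivAt W ((1 / (2 * W x)) • dS) x := hS.sqrt (ne_of_gt (hSpos x))
  have hWinv : HasFDerivAt (fun y => (W y)⁻¹) ((-(W x ^ 2)⁻¹) • ((1 / (2 * W x)) • dS)) x :=
    (hasDerivAt_inv (ne_of_gt (hWpos x))).comp_hasFDerivAt x hW
  have hV : ∀ i, HasFDerivAt (fun y => p i y * (W y)⁻¹)
      (p i x • ((-(W x ^ 2)⁻¹) • ((1 / (2 * W x)) • dS)) + (W x)⁻¹ • dp i) x :=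
    fun i => (hpd i x).mul hWinv
  have hud : ∀ y, HasFDerivAt u (fderiv ℝ u y) y := fun y =>
    ((hu.differentiable (by norm_num)) y).hasFDerivAt
  have hu2 : HasFDerivAt (fun y => fderiv ℝ u y) (fderiv ℝ (fderiv ℝ u) x) x :=
    (((hu.fderiv_right (m := 1) (by norm_num)).differentiable one_ne_zero) x).hasFDerivAt
  have happ : ∀ (i : Fin 2) (v : EuclideanSpace ℝ (Fin 2)),
      dp i v = fderiv ℝ (fderiv ℝ u) x v (EuclideanSpace.single i 1) := by
    intro i v
    have hcomp : p i = (fun L : EuclideanSpace ℝ (Fin 2) →L[ℝ] ℝ =>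
        L (EuclideanSpace.single i (1:ℝ))) ∘ (fderiv ℝ u) := rfl
    have : fderiv ℝ (p i) x = (ContinuousLinearMap.apply ℝ ℝ
        (EuclideanSpace.single i (1:ℝ))).comp (fderiv ℝ (fderiv ℝ u) x) := by
      rw [hcomp]
      rw [show (fun L : EuclideanSpace ℝ (Fin 2) →L[ℝ] ℝ => L (EuclideanSpace.single i (1:ℝ)))
        = ⇑(ContinuousLinearMap.apply ℝ ℝ (EuclideanSpace.single i (1:ℝ))) from rfl]
      rw [fderiv_comp x (ContinuousLinearMap.apply ℝ ℝ
        (EuclideanSpace.single i (1:ℝ))).differentiableAt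
        (((hu.fderiv_right (m := 1) (by norm_num)).differentiable one_ne_zero) x)]
      rw [ContinuousLinearMap.fderiv]
    have hdpi : dp i = fderiv ℝ (p i) x := rfl
    rw [hdpi, this]
    rfl
  have hsym := second_derivative_symmetric hud hu2
    (EuclideanSpace.single (0:Fin 2) (1:ℝ)) (EuclideanSpace.single (1:Fin 2) (1:ℝ))
  have hBC : dp 1 (EuclideanSpace.single (0:Fin 2) (1:ℝ))
      = dp 0 (EuclideanSpace.single (1:Fin 2) (1:ℝ)) := by
    rw [happ, happ]; exact hsym
  have hgoal : ∀ i : Fin 2, fderiv ℝ (fun y => p i y * (W y)⁻¹) x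
      = p i x • ((-(W x ^ 2)⁻¹) • ((1 / (2 * W x)) • dS)) + (W x)⁻¹ • dp i :=
    fun i => (hV i).fderiv
  show ∑ i : Fin 2, fderiv ℝ (fun y => p i y * (W y)⁻¹) x (EuclideanSpace.single i 1) = 0
  rw [Fin.sum_univ_two, hgoal 0, hgoal 1]
  simp only [ContinuousLinearMap.add_apply, ContinuousLinearMap.smul_apply, smul_eq_mul, hdSdef]
  simp only [partialDeriv₁, partialDeriv₂] at hmse
  set P := p 0 x
  set Q := p 1 x
  set A := dp 0 (EuclideanSpace.single (0:Fin 2) (1:ℝ))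
  set B := dp 0 (EuclideanSpace.single (1:Fin 2) (1:ℝ))
  set C := dp 1 (EuclideanSpace.single (0:Fin 2) (1:ℝ))
  set D := dp 1 (EuclideanSpace.single (1:Fin 2) (1:ℝ))
  have hW2 : W x ^ 2 = 1 + (P * P + Q * Q) := Real.sq_sqrt (hSpos x).le
  have hWne : W x ≠ 0 := ne_of_gt (hWpos x)
  have hmse' : (1 + Q ^ 2) * A - 2 * P * Q * B + (1 + P ^ 2) * D = 0 := hmse
  rw [hBC]
  field_simp
  linear_combination 2 * hmse' + (2 * (A + D)) * hW2

lemma grad_inner (f : EuclideanSpace ℝ (Fin 2) → ℝ) (x v : EuclideanSpace ℝ (Fin 2)) :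
    (inner ℝ (gradient f x) v : ℝ) = fderiv ℝ f x v :=
  InnerProductSpace.toDual_symm_apply

lemma grad_coord (f : EuclideanSpace ℝ (Fin 2) → ℝ) (x : EuclideanSpace ℝ (Fin 2)) (i : Fin 2) :
    gradient f x i = fderiv ℝ f x (EuclideanSpace.single i 1) := by
  have h := grad_inner f x (EuclideanSpace.single i 1)
  rw [EuclideanSpace.inner_single_right] at h
  simpa using h

lemma grad_norm_sq (f : EuclideanSpace ℝ (Fin 2) → ℝ) (x : EuclideanSpace ℝ (Fin 2)) :
    ‖gradient f x‖ ^ 2 = fderiv ℝ f x (EuclideanSpace.single 0 1) * fderiv ℝ f x (EuclideanSpace.single 0 1)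
      + fderiv ℝ f x (EuclideanSpace.single 1 1) * fderiv ℝ f x (EuclideanSpace.single 1 1) := by
  rw [← real_inner_self_eq_norm_sq]
  rw [PiLp.inner_apply]
  simp [Fin.sum_univ_two, RCLike.inner_apply, grad_coord]
  ring

lemma grad_inner_sum (f g : EuclideanSpace ℝ (Fin 2) → ℝ) (x : EuclideanSpace ℝ (Fin 2)) :
    (inner ℝ (gradient f x) (gradient g x) : ℝ)
      = fderiv ℝ f x (EuclideanSpace.single 0 1) * fderiv ℝ g x (EuclideanSpace.single 0 1)
      + fderiv ℝ f x (EuclideanSpace.single 1 1) * fderiv ℝ g x (EuclideanSpace.single 1 1) := by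
  rw [PiLp.inner_apply]
  simp [Fin.sum_univ_two, RCLike.inner_apply, grad_coord]
  ring

lemma grad_continuous (f : EuclideanSpace ℝ (Fin 2) → ℝ) (hf : ContDiff ℝ 1 f) :
    Continuous (gradient f) := by
  have h : gradient f = fun x =>
      (InnerProductSpace.toDual ℝ (EuclideanSpace ℝ (Fin 2))).symm (fderiv ℝ f x) := rfl
  rw [h]
  exact (LinearIsometryEquiv.continuous _).comp
    ((hf.fderiv_right (m := 0) (by norm_num)).continuous)

lemma grad_zero_of_nmem (f : EuclideanSpace ℝ (Fin 2) → ℝ) (x : EuclideanSpace ℝ (Fin 2))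
    (hx : x ∉ tsupport f) : gradient f x = 0 := by
  have h : fderiv ℝ f x = 0 := by
    by_contra h
    exact hx (support_fderiv_subset ℝ (by simpa [Function.mem_support] using h))
  have hg : gradient f x =
      (InnerProductSpace.toDual ℝ (EuclideanSpace ℝ (Fin 2))).symm (fderiv ℝ f x) := rfl
  rw [hg, h, map_zero]

end Aux
/-- **Minimal graphs minimize area among graphs with the same boundary values.**
If `u` is `C²` and satisfies the minimal surface equation on the open set `Ω`, and
`φ` is smooth with compact support contained in `Ω`, then the area of the graph of
`u + φ` over `K = tsupport φ` is at least the area of the graph of `u` over `K`. -/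
theorem minimal_graph_minimizes_area
    (Ω : Set (EuclideanSpace ℝ (Fin 2))) (hΩ : IsOpen Ω)
    (u φ : EuclideanSpace ℝ (Fin 2) → ℝ)
    (hu : ContDiff ℝ 2 u) (hmse : SatisfiesMinimalSurfaceEquation u Ω)
    (hφ : ContDiff ℝ (⊤ : ℕ∞) φ) (hφc : HasCompactSupport φ) (hφΩ : tsupport φ ⊆ Ω) :
    (∫ x in tsupport φ, Real.sqrt (1 + ‖gradient u x‖ ^ 2))
      ≤ ∫ x in tsupport φ, Real.sqrt (1 + ‖gradient u x + gradient φ x‖ ^ 2) := by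
  have hφ1 : ContDiff ℝ 1 φ := hφ.of_le (by simp)
  have hKc : IsCompact (tsupport φ) := hφc
  set p : Fin 2 → EuclideanSpace ℝ (Fin 2) → ℝ :=
    fun i y => fderiv ℝ u y (EuclideanSpace.single i 1) with hpdef
  have hp1 : ∀ i, ContDiff ℝ 1 (p i) := fun i =>
    (ContinuousLinearMap.apply ℝ ℝ (EuclideanSpace.single i (1:ℝ))).contDiff.comp
      (hu.fderiv_right (m := 1) (by norm_num))
  set W : EuclideanSpace ℝ (Fin 2) → ℝ :=
    fun y => Real.sqrt (1 + (p 0 y * p 0 y + p 1 y * p 1 y)) with hWdef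
  have hSpos : ∀ y, (0:ℝ) < 1 + (p 0 y * p 0 y + p 1 y * p 1 y) := fun y => by
    have h1 : 0 ≤ p 0 y * p 0 y := mul_self_nonneg _
    have h2 : 0 ≤ p 1 y * p 1 y := mul_self_nonneg _
    linarith
  have hWpos : ∀ y, 0 < W y := fun y => Real.sqrt_pos.2 (hSpos y)
  have hWgrad : ∀ y, Real.sqrt (1 + ‖gradient u y‖ ^ 2) = W y := by
    intro y
    rw [grad_norm_sq u y]
  have hW1 : ContDiff ℝ 1 W := by
    apply ContDiff.sqrt
    · exact contDiff_const.add (((hp1 0).mul (hp1 0)).add ((hp1 1).mul (hp1 1)))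
    · exact fun y => (hSpos y).ne'
  set V : Fin 2 → EuclideanSpace ℝ (Fin 2) → ℝ := fun i y => p i y * (W y)⁻¹ with hVdef
  have hV1 : ∀ i, ContDiff ℝ 1 (V i) := fun i =>
    (hp1 i).mul (hW1.inv fun y => (hWpos y).ne')
  set F : Fin 2 → EuclideanSpace ℝ (Fin 2) → ℝ := fun i y => φ y * V i y with hFdef
  have hF1 : ∀ i, ContDiff ℝ 1 (F i) := fun i => hφ1.mul (hV1 i)
  have hFc : ∀ i, HasCompactSupport (F i) := fun i => hφc.mul_right
  have hdiv0 := euclidean_div_integral F hF1 hFc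
  have hφdiff : ∀ y, DifferentiableAt ℝ φ y := fun y => (hφ1.differentiable one_ne_zero) y
  have hVdiff : ∀ i y, DifferentiableAt ℝ (V i) y := fun i y => ((hV1 i).differentiable one_ne_zero) y
  have hsplit : ∀ y, ∑ i : Fin 2, fderiv ℝ (F i) y (EuclideanSpace.single i 1)
      = (∑ i : Fin 2, V i y * fderiv ℝ φ y (EuclideanSpace.single i 1))
        + φ y * (∑ i : Fin 2, fderiv ℝ (V i) y (EuclideanSpace.single i 1)) := by
    intro y
    rw [Fin.sum_univ_two, Fin.sum_univ_two, Fin.sum_univ_two]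
    rw [show F 0 = fun y => φ y * V 0 y from rfl, show F 1 = fun y => φ y * V 1 y from rfl]
    rw [fderiv_fun_mul (hφdiff y) (hVdiff 0 y), fderiv_fun_mul (hφdiff y) (hVdiff 1 y)]
    simp only [ContinuousLinearMap.add_apply, ContinuousLinearMap.smul_apply, smul_eq_mul]
    ring
  have hdivV : ∀ y, φ y * (∑ i : Fin 2, fderiv ℝ (V i) y (EuclideanSpace.single i 1)) = 0 := by
    intro y
    by_cases hy : y ∈ Ω
    · have h0 : (∑ i : Fin 2, fderiv ℝ (V i) y (EuclideanSpace.single i 1)) = 0 :=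
        mse_pointwise u hu y (hmse y hy)
      rw [h0, mul_zero]
    · have hφy : φ y = 0 := image_eq_zero_of_notMem_tsupport (fun hc => hy (hφΩ hc))
      rw [hφy, zero_mul]
  have hint0 : ∫ y, (∑ i : Fin 2, V i y * fderiv ℝ φ y (EuclideanSpace.single i 1)) = 0 := by
    rw [← hdiv0]
    apply integral_congr_ae
    apply Filter.Eventually.of_forall
    intro y
    show (∑ i : Fin 2, V i y * fderiv ℝ φ y (EuclideanSpace.single i 1))
      = ∑ i : Fin 2, fderiv ℝ (F i) y (EuclideanSpace.single i 1)
    rw [hsplit y, hdivV y, add_zero]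
  have hKzero : ∀ y ∉ tsupport φ,
      (∑ i : Fin 2, V i y * fderiv ℝ φ y (EuclideanSpace.single i 1)) = 0 := by
    intro y hy
    have hfd : fderiv ℝ φ y = 0 := by
      by_contra hc
      exact hy (subset_closure (by simpa [Function.mem_support] using hc) |>
        (closure_minimal (support_fderiv_subset ℝ) (isClosed_tsupport φ)))
    simp [hfd]
  have hhK : ∫ y in tsupport φ,
      (∑ i : Fin 2, V i y * fderiv ℝ φ y (EuclideanSpace.single i 1)) = 0 := by
    rw [setIntegral_eq_integral_of_forall_compl_eq_zero hKzero]
    exact hint0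
  have hpt : ∀ y, Real.sqrt (1 + ‖gradient u y‖ ^ 2)
      + (∑ i : Fin 2, V i y * fderiv ℝ φ y (EuclideanSpace.single i 1))
      ≤ Real.sqrt (1 + ‖gradient u y + gradient φ y‖ ^ 2) := by
    intro y
    have hconv := convexity_aux (gradient u y) (gradient φ y)
    have heq : (∑ i : Fin 2, V i y * fderiv ℝ φ y (EuclideanSpace.single i 1))
        = (Real.sqrt (1 + ‖gradient u y‖ ^ 2))⁻¹
          * (inner ℝ (gradient u y) (gradient φ y) : ℝ) := by
      rw [grad_inner_sum u φ y, hWgrad y, Fin.sum_univ_two]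
      show p 0 y * (W y)⁻¹ * fderiv ℝ φ y _ + p 1 y * (W y)⁻¹ * fderiv ℝ φ y _ = _
      ring
    rw [heq]
    exact hconv
  have hgucont : Continuous (gradient u) := grad_continuous u (hu.of_le (by norm_num))
  have hgφcont : Continuous (gradient φ) := grad_continuous φ hφ1
  have hC1 : Continuous (fun y => Real.sqrt (1 + ‖gradient u y‖ ^ 2)) :=
    Real.continuous_sqrt.comp (continuous_const.add ((hgucont.norm).pow 2))
  have hC2 : Continuous (fun y => Real.sqrt (1 + ‖gradient u y + gradient φ y‖ ^ 2)) :=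
    Real.continuous_sqrt.comp (continuous_const.add (((hgucont.add hgφcont).norm).pow 2))
  have hCh : Continuous (fun y =>
      ∑ i : Fin 2, V i y * fderiv ℝ φ y (EuclideanSpace.single i 1)) := by
    apply continuous_finset_sum
    intro i _
    exact ((hV1 i).continuous).mul
      ((ContinuousLinearMap.apply ℝ ℝ (EuclideanSpace.single i (1:ℝ))).continuous.comp
        ((hφ1.fderiv_right (m := 0) (by norm_num)).continuous))
  have hi1 : IntegrableOn (fun y => Real.sqrt (1 + ‖gradient u y‖ ^ 2)) (tsupport φ) :=
    hC1.continuousOn.integrableOn_compact hKc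
  have hi2 : IntegrableOn (fun y => Real.sqrt (1 + ‖gradient u y + gradient φ y‖ ^ 2))
      (tsupport φ) := hC2.continuousOn.integrableOn_compact hKc
  have hih : IntegrableOn (fun y =>
      ∑ i : Fin 2, V i y * fderiv ℝ φ y (EuclideanSpace.single i 1)) (tsupport φ) :=
    hCh.continuousOn.integrableOn_compact hKc
  calc (∫ x in tsupport φ, Real.sqrt (1 + ‖gradient u x‖ ^ 2))
      = ∫ x in tsupport φ, (Real.sqrt (1 + ‖gradient u x‖ ^ 2)
          + ∑ i : Fin 2, V i x * fderiv ℝ φ x (EuclideanSpace.single i 1)) := by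
        rw [integral_add hi1 hih, hhK, add_zero]
    _ ≤ ∫ x in tsupport φ, Real.sqrt (1 + ‖gradient u x + gradient φ x‖ ^ 2) :=
        setIntegral_mono_on (hi1.add hih) hi2 hKc.measurableSet (fun y _ => hpt y)
end
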